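/- arXiv:2505.05462 — 4 statements merged into one kernel-verified Lean document; each statement's English description precedes it below -/
import Mathlib

section
/- Let (V; η_1,…,η_k; ω_1,…,ω_k) be a k-contact structure on a finite-dimensional real vector space V. Then there exists a unique family of vectors R_1,…,R_k ∈ V (the Reeb vectors) such that η_α(R_β) = δ_{αβ} and ω_α(R_β, w) = 0 for all w ∈ V and all α, β ∈ {1,…,k}. Moreover, R_1,…,R_k are linearly independent and span the joint radical ⋂_{α=1}^k rad ω_α. -/
open Module

/-- A `k`-contact structure on a real vector space `V`: a family of linear functionals
`η α : V →ₗ[ℝ] ℝ` and alternating bilinear forms `ω α : V →ₗ[ℝ] V →ₗ[ℝ] ℝ` such that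
(1) `⋂ α, ker (η α)` has codimension `k` in `V`;
(2) the joint radical `⋂ α, rad (ω α)` (where `rad ω = ker ω`) has dimension `k`;
(3) the two intersect trivially. -/
def IsKContactStruct {V : Type*} [AddCommGroup V] [Module ℝ V] {k : ℕ}
    (η : Fin k → (V →ₗ[ℝ] ℝ)) (ω : Fin k → (V →ₗ[ℝ] V →ₗ[ℝ] ℝ)) : Prop :=
  (∀ α (v : V), ω α v v = 0) ∧
  finrank ℝ ↥(⨅ α, LinearMap.ker (η α)) + k = finrank ℝ V ∧
  finrank ℝ ↥(⨅ α, LinearMap.ker (ω α)) = k ∧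
  (⨅ α, LinearMap.ker (η α)) ⊓ (⨅ α, LinearMap.ker (ω α)) = ⊥

/-! Evaluation against `η₁, …, η_k` is injective on the joint radical, which meets
`⋂ ker η_α` trivially; as the radical has dimension `k`, it is an isomorphism onto `ℝᵏ`, and the
Reeb vectors are the preimages of the standard basis. Any family with `η_α(R_β) = δ_{αβ}` is
linearly independent, so `k` of them in the `k`-dimensional radical span it. -/

open Submodule LinearMap

section DualFamily

variable {K V ι : Type*} [Field K] [AddCommGroup V] [Module K V]

theorem LinearMap.pi_apply_eq_single_one_iff [DecidableEq ι] (η : ι → V →ₗ[K] K) (v : V)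
    (j : ι) : LinearMap.pi η v = Pi.single j 1 ↔ ∀ i, η i v = if i = j then 1 else 0 := by
  simp only [funext_iff, pi_apply, Pi.single_apply]

theorem linearIndependent_of_apply_eq_ite [DecidableEq ι] (η : ι → V →ₗ[K] K) {R : ι → V}
    (hR : ∀ i j, η i (R j) = if i = j then 1 else 0) : LinearIndependent K R := by
  have hsingle : LinearMap.pi η ∘ R = fun j => Pi.single j 1 :=
    funext fun j => (LinearMap.pi_apply_eq_single_one_iff η (R j) j).2 fun i => hR i j
  exact LinearIndependent.of_comp (LinearMap.pi η) (hsingle ▸ Pi.linearIndependent_single_one ι K)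

theorem existsUnique_apply_eq_ite_of_disjoint [Fintype ι] [DecidableEq ι] [FiniteDimensional K V]
    (η : ι → V →ₗ[K] K) {W : Submodule K V} (hdisj : Disjoint W (⨅ i, ker (η i)))
    (hdim : finrank K W = Fintype.card ι) :
    ∃! R : ι → V, (∀ i j, η i (R j) = if i = j then 1 else 0) ∧ ∀ j, R j ∈ W := by
  set f := (LinearMap.pi η).domRestrict W
  have hinj : Function.Injective f := by
    rwa [injective_domRestrict_iff, ker_pi]
  have hsurj : Function.Surjective f :=
    (injective_iff_surjective_of_finrank_eq_finrank (by simpa using hdim)).1 hinj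
  choose R hR using fun j : ι => hsurj (Pi.single j 1)
  refine ⟨fun j => R j, ⟨fun i j => ?_, fun j => (R j).2⟩, ?_⟩
  · exact (LinearMap.pi_apply_eq_single_one_iff η _ j).1 (hR j) i
  · rintro R' ⟨hR'η, hR'W⟩
    funext j
    have : f ⟨R' j, hR'W j⟩ = f (R j) := by
      rw [hR j]
      exact (LinearMap.pi_apply_eq_single_one_iff η _ j).2 fun i => hR'η i j
    exact congrArg Subtype.val (hinj this)

theorem span_range_eq_of_linearIndependent [Fintype ι] [FiniteDimensional K V] {R : ι → V}
    {W : Submodule K V} (hR : LinearIndependent K R) (hRW : ∀ j, R j ∈ W)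
    (hdim : finrank K W = Fintype.card ι) : span K (Set.range R) = W := by
  refine eq_of_le_of_finrank_le (span_le.2 (Set.range_subset_iff.2 hRW)) ?_
  rw [hdim, finrank_span_eq_card hR]

end DualFamily

theorem mem_iInf_ker_iff_forall_apply_eq_zero {R M N P ι : Type*} [CommSemiring R]
    [AddCommMonoid M] [AddCommMonoid N] [AddCommMonoid P] [Module R M] [Module R N] [Module R P]
    (ω : ι → M →ₗ[R] N →ₗ[R] P) (v : M) :
    v ∈ ⨅ i, ker (ω i) ↔ ∀ i w, ω i v w = 0 := by
  simp only [mem_iInf, mem_ker, LinearMap.ext_iff, LinearMap.zero_apply]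

/-- **Reeb vectors of a `k`-contact vector space.**  For any `k`-contact structure
`(V; η₁, …, η_k; ω₁, …, ω_k)` on a finite-dimensional real vector space `V` there is a
unique family of vectors `R₁, …, R_k ∈ V` with `η α (R β) = δ_{αβ}` and `ω α (R β, w) = 0`
for all `w`; moreover any such family is linearly independent and spans the joint radical
`⋂ α, rad (ω α)`. -/
theorem reeb_vectors_of_kContact
    {V : Type*} [AddCommGroup V] [Module ℝ V] [FiniteDimensional ℝ V] {k : ℕ}
    (η : Fin k → (V →ₗ[ℝ] ℝ)) (ω : Fin k → (V →ₗ[ℝ] V →ₗ[ℝ] ℝ))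
    (h : IsKContactStruct η ω) :
    (∃! R : Fin k → V,
      (∀ α β, η α (R β) = if α = β then 1 else 0) ∧
      (∀ α β (w : V), ω α (R β) w = 0)) ∧
    ∀ R : Fin k → V,
      ((∀ α β, η α (R β) = if α = β then 1 else 0) ∧
        (∀ α β (w : V), ω α (R β) w = 0)) →
      LinearIndependent ℝ R ∧
        Submodule.span ℝ (Set.range R) = ⨅ α, LinearMap.ker (ω α) := by
  obtain ⟨-, -, hdim, htriv⟩ := h
  replace hdim := hdim.trans (Fintype.card_fin k).symm
  have hdisj : Disjoint (⨅ α, ker (ω α)) (⨅ α, ker (η α)) := disjoint_iff.2 (by rwa [inf_comm])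
  have hradical : ∀ R : Fin k → V,
      (∀ α β (w : V), ω α (R β) w = 0) ↔ ∀ β, R β ∈ ⨅ α, ker (ω α) := fun R => by
    simp only [mem_iInf_ker_iff_forall_apply_eq_zero]
    exact forall_comm
  simp only [hradical]
  refine ⟨existsUnique_apply_eq_ite_of_disjoint η hdisj hdim, fun R ⟨hη, hW⟩ => ?_⟩
  have hR := linearIndependent_of_apply_eq_ite η hη
  exact ⟨hR, span_range_eq_of_linearIndependent hR hW hdim⟩
end

section
/- Let (V; η_1,…,η_k; ω_1,…,ω_k) be a k-contact structure on a finite-dimensional real vector space V, with Reeb vectors R_1,…,R_k (the unique vectors satisfying η_α(R_β) = δ_{αβ} and ω_α(R_β,·) = 0). Let T ⊆ V be a subspace containing all R_β, and set D := {t ∈ T : η_α(t) = 0 for all α, and ω_α(t,t') = 0 for all t' ∈ T and all α}. Then D = T ∩ T^{⊥k} ∩ ⋂_{α=1}^k ker η_α; the restrictions of the η_α and ω_α to T descend to well-defined linear functionals η̄_α and alternating bilinear forms ω̄_α on the quotient Q := T/D; the data (Q; η̄_1,…,η̄_k; ω̄_1,…,ω̄_k) is a k-contact structure on Q; and the classes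 [R_1],…,[R_k] are its Reeb vectors. -/
open Module

/-- The `k`-orthogonal `W^{⊥k} = {v : V | ω α (w, v) = 0 for all w ∈ W and all α}`
of a subspace `W` with respect to the family of bilinear forms `ω`. -/
def kOrth {V : Type*} [AddCommGroup V] [Module ℝ V] {k : ℕ}
    (ω : Fin k → (V →ₗ[ℝ] V →ₗ[ℝ] ℝ)) (W : Submodule ℝ V) : Submodule ℝ V where
  carrier := {v | ∀ w ∈ W, ∀ α, ω α w v = 0}
  zero_mem' := fun w _ α => map_zero (ω α w)
  add_mem' := by
    intro a b ha hb w hw α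
    rw [map_add, ha w hw α, hb w hw α, add_zero]
  smul_mem' := by
    intro c a ha w hw α
    rw [map_smul, ha w hw α, smul_zero]

/-- The subspace `D = {t ∈ T : η α t = 0 for all α, and ω α (t, t') = 0 for all t' ∈ T, α}`,
regarded as a subspace of `T`. -/
noncomputable def reducedD {V : Type*} [AddCommGroup V] [Module ℝ V] {k : ℕ}
    (η : Fin k → (V →ₗ[ℝ] ℝ)) (ω : Fin k → (V →ₗ[ℝ] V →ₗ[ℝ] ℝ))
    (T : Submodule ℝ V) : Submodule ℝ ↥T :=
  (⨅ α, LinearMap.ker ((η α).comp T.subtype)) ⊓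
    (⨅ α, LinearMap.ker ((ω α).compl₁₂ T.subtype T.subtype))


/-!
Because the Reeb vectors lie in `T`, their classes in `T ⧸ D` are again biorthogonal to the
descended `η` and lie in the radical of the descended `ω`. These two facts alone make an
alternating family `k`-contact as soon as `⋂ ker η` meets the joint radical trivially: `η`
maps `V` onto `ℝ^k`, split by the Reeb vectors, and restricts to an isomorphism from the
radical onto `ℝ^k`. On `T ⧸ D` that last condition holds by the very definition of `D`.
-/

section Reeb

variable {V : Type*} [AddCommGroup V] [Module ℝ V] {k : ℕ}
  {η : Fin k → (V →ₗ[ℝ] ℝ)} {ω : Fin k → (V →ₗ[ℝ] V →ₗ[ℝ] ℝ)} {R : Fin k → V}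

theorem pi_sum_smul_eq_of_biorthogonal (hR : ∀ α β, η α (R β) = if α = β then 1 else 0)
    (c : Fin k → ℝ) : LinearMap.pi η (∑ β, c β • R β) = c := by
  ext α
  simp [hR]

theorem finrank_iInf_ker_add_eq_of_biorthogonal [FiniteDimensional ℝ V]
    (hR : ∀ α β, η α (R β) = if α = β then 1 else 0) :
    finrank ℝ ↥(⨅ α, LinearMap.ker (η α)) + k = finrank ℝ V := by
  have hsurj : Function.Surjective (LinearMap.pi η) := fun c =>
    ⟨_, pi_sum_smul_eq_of_biorthogonal hR c⟩
  have := (LinearMap.pi η).finrank_range_add_finrank_ker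
  rw [LinearMap.ker_pi, LinearMap.range_eq_top.2 hsurj, finrank_top, finrank_fin_fun] at this
  omega

theorem finrank_iInf_ker_eq_of_reeb (hR1 : ∀ α β, η α (R β) = if α = β then 1 else 0)
    (hR2 : ∀ β, R β ∈ ⨅ α, LinearMap.ker (ω α))
    (hdisj : (⨅ α, LinearMap.ker (η α)) ⊓ (⨅ α, LinearMap.ker (ω α)) = ⊥) :
    finrank ℝ ↥(⨅ α, LinearMap.ker (ω α)) = k := by
  set K := ⨅ α, LinearMap.ker (ω α)
  have hinj : Function.Injective ((LinearMap.pi η).domRestrict K) := by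
    rw [← LinearMap.ker_eq_bot, eq_bot_iff]
    rintro ⟨v, hvK⟩ hv
    have hvη : v ∈ ⨅ α, LinearMap.ker (η α) := by
      rwa [← LinearMap.ker_pi]
    simpa [hdisj] using Submodule.mem_inf.2 ⟨hvη, hvK⟩
  have hsurj : Function.Surjective ((LinearMap.pi η).domRestrict K) := fun c =>
    ⟨⟨∑ β, c β • R β, sum_mem fun β _ => K.smul_mem _ (hR2 β)⟩,
      pi_sum_smul_eq_of_biorthogonal hR1 c⟩
  rw [(LinearEquiv.ofBijective _ ⟨hinj, hsurj⟩).finrank_eq, finrank_fin_fun]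

theorem isKContactStruct_of_reeb [FiniteDimensional ℝ V] (halt : ∀ α, (ω α).IsAlt)
    (hR1 : ∀ α β, η α (R β) = if α = β then 1 else 0)
    (hR2 : ∀ β, R β ∈ ⨅ α, LinearMap.ker (ω α))
    (hdisj : (⨅ α, LinearMap.ker (η α)) ⊓ (⨅ α, LinearMap.ker (ω α)) = ⊥) :
    IsKContactStruct η ω :=
  ⟨halt, finrank_iInf_ker_add_eq_of_biorthogonal hR1, finrank_iInf_ker_eq_of_reeb hR1 hR2 hdisj,
    hdisj⟩

end Reeb

section Reduction

variable {V : Type*} [AddCommGroup V] [Module ℝ V] {k : ℕ}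
  (η : Fin k → (V →ₗ[ℝ] ℝ)) (ω : Fin k → (V →ₗ[ℝ] V →ₗ[ℝ] ℝ)) (T : Submodule ℝ V)

theorem mem_reducedD {t : T} :
    t ∈ reducedD η ω T ↔ (∀ α, η α t = 0) ∧ ∀ α (t' : T), ω α t t' = 0 := by
  simp [reducedD, LinearMap.ext_iff]

theorem map_subtype_reducedD (halt : ∀ α, (ω α).IsAlt) :
    Submodule.map T.subtype (reducedD η ω T) = T ⊓ kOrth ω T ⊓ ⨅ α, LinearMap.ker (η α) := by
  ext v
  simp only [Submodule.mem_map, mem_reducedD, Submodule.mem_inf, Submodule.mem_iInf,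
    LinearMap.mem_ker, Submodule.coe_subtype]
  constructor
  · rintro ⟨t, ⟨hη, hω⟩, rfl⟩
    exact ⟨⟨t.2, fun w hw α => (halt α).eq_iff.1 (hω α ⟨w, hw⟩)⟩, hη⟩
  · rintro ⟨⟨hvT, hvT'⟩, hη⟩
    exact ⟨⟨v, hvT⟩, ⟨hη, fun α t' => (halt α).eq_iff.1 (hvT' t' t'.2 α)⟩, rfl⟩

noncomputable def reducedEta (α : Fin k) : ↥T ⧸ reducedD η ω T →ₗ[ℝ] ℝ :=
  (reducedD η ω T).liftQ ((η α).comp T.subtype) (inf_le_left.trans (iInf_le _ α))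

noncomputable def reducedOmega (halt : ∀ α, (ω α).IsAlt) (α : Fin k) :
    ↥T ⧸ reducedD η ω T →ₗ[ℝ] ↥T ⧸ reducedD η ω T →ₗ[ℝ] ℝ :=
  LinearMap.IsRefl.liftQ₂ ((ω α).compl₁₂ T.subtype T.subtype) (reducedD η ω T)
    (LinearMap.IsAlt.isRefl fun t => halt α t) (inf_le_right.trans (iInf_le _ α))

theorem reducedOmega_isAlt (halt : ∀ α, (ω α).IsAlt) (α : Fin k) :
    (reducedOmega η ω T halt α).IsAlt :=
  (Submodule.Quotient.forall _).2 fun t => halt α t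

theorem iInf_ker_reducedEta_inf_iInf_ker_reducedOmega (halt : ∀ α, (ω α).IsAlt) :
    (⨅ α, LinearMap.ker (reducedEta η ω T α)) ⊓
      (⨅ α, LinearMap.ker (reducedOmega η ω T halt α)) = ⊥ := by
  refine eq_bot_iff.2 ((Submodule.Quotient.forall _).2 fun t ht => ?_)
  simp only [Submodule.mem_inf, Submodule.mem_iInf, LinearMap.mem_ker, LinearMap.ext_iff,
    Submodule.Quotient.forall, LinearMap.zero_apply] at ht
  exact (Submodule.Quotient.mk_eq_zero _).2 ((mem_reducedD η ω T).2 ht)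

end Reduction

/-- **`k`-contact reduction by a subspace containing the Reeb vectors.**
If `T` is a subspace of a `k`-contact vector space containing the Reeb vectors `R β`, and
`D = {t ∈ T : η α t = 0 ∀α, ω α (t, t') = 0 ∀ t' ∈ T ∀α}`, then
`D = T ⊓ T^{⊥k} ⊓ ⋂ ker (η α)`, the `η α` and `ω α` descend to the quotient `T ⧸ D`,
the descended data is a `k`-contact structure, and the classes of the `R β` are its Reeb
vectors. -/
theorem kContact_reduction_by_subspace
    {V : Type*} [AddCommGroup V] [Module ℝ V] [FiniteDimensional ℝ V] {k : ℕ}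
    (η : Fin k → (V →ₗ[ℝ] ℝ)) (ω : Fin k → (V →ₗ[ℝ] V →ₗ[ℝ] ℝ))
    (h : IsKContactStruct η ω) (R : Fin k → V)
    (hR1 : ∀ α β, η α (R β) = if α = β then 1 else 0)
    (hR2 : ∀ α β (w : V), ω α (R β) w = 0)
    (T : Submodule ℝ V) (hT : ∀ β, R β ∈ T) :
    Submodule.map T.subtype (reducedD η ω T)
        = T ⊓ kOrth ω T ⊓ ⨅ α, LinearMap.ker (η α) ∧
    ∃ (ηQ : Fin k → ((↥T ⧸ reducedD η ω T) →ₗ[ℝ] ℝ))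
      (ωQ : Fin k → ((↥T ⧸ reducedD η ω T) →ₗ[ℝ] (↥T ⧸ reducedD η ω T) →ₗ[ℝ] ℝ)),
      (∀ α (t : T), ηQ α (Submodule.Quotient.mk t) = η α (t : V)) ∧
      (∀ α (t t' : T),
        ωQ α (Submodule.Quotient.mk t) (Submodule.Quotient.mk t') = ω α (t : V) (t' : V)) ∧
      IsKContactStruct ηQ ωQ ∧
      (∀ α β, ηQ α (Submodule.Quotient.mk ⟨R β, hT β⟩) = if α = β then 1 else 0) ∧
      (∀ α β (q : ↥T ⧸ reducedD η ω T),
        ωQ α (Submodule.Quotient.mk ⟨R β, hT β⟩) q = 0) := by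
  have halt : ∀ α, (ω α).IsAlt := h.1
  have hRQ1 : ∀ α β, reducedEta η ω T α (Submodule.Quotient.mk ⟨R β, hT β⟩)
      = if α = β then 1 else 0 := hR1
  have hRQ2 : ∀ α β (q : ↥T ⧸ reducedD η ω T),
      reducedOmega η ω T halt α (Submodule.Quotient.mk ⟨R β, hT β⟩) q = 0 :=
    fun α β => (Submodule.Quotient.forall _).2 fun t => hR2 α β t
  refine ⟨map_subtype_reducedD η ω T halt, reducedEta η ω T, reducedOmega η ω T halt,
    fun _ _ => rfl, fun _ _ _ => rfl, ?_, hRQ1, hRQ2⟩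
  exact isKContactStruct_of_reeb (reducedOmega_isAlt η ω T halt) hRQ1
    (fun β => Submodule.mem_iInf _ |>.2 fun α => LinearMap.ext (hRQ2 α β))
    (iInf_ker_reducedEta_inf_iInf_ker_reducedOmega η ω T halt)
end

section
/- Let V = ℝ⁴ with standard dual basis e_1*, e_2*, e_3*, e_4*, and set η_1 := e_1*, η_2 := e_2*, ψ_1(u,v) := u_3v_4 − u_4v_3, ψ_2(u,v) := u_2v_1 − u_1v_2. Define alternating bilinear forms Ω_α on ℝ × ℝ⁴ by Ω_α((a,u),(b,v)) := a·η_α(v) − b·η_α(u) + ψ_α(u,v). Then ⋂_{α=1}^2 rad Ω_α = 0 (so the ℝ²-valued two-form (Ω_1, Ω_2) is 2-symplectic), yet ⋂_{α=1}^2 rad ψ_α = 0 is zero-dimensional rather than 2-dimensional; in particular there exist no vectors R_1, R_2 ∈ ℝ⁴ with η_α(R_β) = δ_{αβ} and ψ_α(R_β,·) = 0, so (η_1, η_2; ψ_1, ψ_2) is not a 2-contact structure on ℝ⁴. -/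
/-!
The forms `ψ₁ = e₃* ∧ e₄*` and `ψ₂ = e₂* ∧ e₁*` are area forms on complementary planes, so their
joint radical is already zero; this alone rules out Reeb vectors and a `2`-contact structure. On
`ℝ × ℝ⁴` the radical of `(Ω₁, Ω₂)` is zero as well: pairing with `(0, e₁)` kills the `ℝ`-component,
because `e₁` lies in the radical of `ψ₁` while `η₁ e₁ = 1`, and what remains is the radical of `ψ`.
-/

open Module

section Radical

variable {𝕜 V : Type*} [Field 𝕜] [AddCommGroup V] [Module 𝕜 V] {k : ℕ}

theorem mem_iInf_ker_iff_forall_apply_eq_zero_s5 {ω : Fin k → (V →ₗ[𝕜] V →ₗ[𝕜] 𝕜)} {u : V} :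
    u ∈ ⨅ α, LinearMap.ker (ω α) ↔ ∀ α v, ω α u v = 0 := by
  simp only [Submodule.mem_iInf, LinearMap.mem_ker, LinearMap.ext_iff, LinearMap.zero_apply]

theorem not_exists_reeb_of_iInf_ker_eq_bot (hk : k ≠ 0) {η : Fin k → (V →ₗ[𝕜] 𝕜)}
    {ω : Fin k → (V →ₗ[𝕜] V →ₗ[𝕜] 𝕜)} (h : ⨅ α, LinearMap.ker (ω α) = ⊥) :
    ¬ ∃ R : Fin k → V,
      (∀ α β, η α (R β) = if α = β then 1 else 0) ∧ ∀ α β w, ω α (R β) w = 0 := by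
  rintro ⟨R, hη, hω⟩
  let β : Fin k := ⟨0, Nat.pos_of_ne_zero hk⟩
  have hR : R β = 0 := by
    rw [← Submodule.mem_bot 𝕜, ← h, mem_iInf_ker_iff_forall_apply_eq_zero_s5]
    exact fun α => hω α β
  simpa [hR] using hη β β

theorem iInf_ker_symplectisation_eq_bot {η : Fin k → (V →ₗ[𝕜] 𝕜)}
    {ψ : Fin k → (V →ₗ[𝕜] V →ₗ[𝕜] 𝕜)} {Ω : Fin k → ((𝕜 × V) →ₗ[𝕜] (𝕜 × V) →ₗ[𝕜] 𝕜)}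
    (hΩ : ∀ α a u b v, Ω α (a, u) (b, v) = a * η α v - b * η α u + ψ α u v)
    (hψ : ⨅ α, LinearMap.ker (ψ α) = ⊥) {α₀ : Fin k} {v₀ : V} (hηv₀ : η α₀ v₀ ≠ 0)
    (hψv₀ : ∀ u, ψ α₀ u v₀ = 0) :
    ⨅ α, LinearMap.ker (Ω α) = ⊥ := by
  refine (Submodule.eq_bot_iff _).2 fun ⟨a, u⟩ hau => ?_
  rw [mem_iInf_ker_iff_forall_apply_eq_zero_s5] at hau
  have ha : a = 0 := by
    have := hau α₀ (0, v₀)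
    rw [hΩ, hψv₀] at this
    simpa [hηv₀] using this
  subst ha
  have hu : u = 0 := by
    rw [← Submodule.mem_bot 𝕜, ← hψ, mem_iInf_ker_iff_forall_apply_eq_zero_s5]
    intro α v
    simpa [hΩ] using hau α (0, v)
  simp [hu]

theorem iInf_ker_eq_bot_of_complementary_area_forms
    {ψ : Fin 2 → ((Fin 4 → 𝕜) →ₗ[𝕜] (Fin 4 → 𝕜) →ₗ[𝕜] 𝕜)}
    (hψ0 : ∀ u v, ψ 0 u v = u 2 * v 3 - u 3 * v 2)
    (hψ1 : ∀ u v, ψ 1 u v = u 1 * v 0 - u 0 * v 1) :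
    ⨅ α, LinearMap.ker (ψ α) = ⊥ := by
  refine (Submodule.eq_bot_iff _).2 fun u hu => ?_
  rw [mem_iInf_ker_iff_forall_apply_eq_zero_s5] at hu
  have h0 := hu 1 (Pi.single 1 1)
  have h1 := hu 1 (Pi.single 0 1)
  have h2 := hu 0 (Pi.single 3 1)
  have h3 := hu 0 (Pi.single 2 1)
  simp only [hψ0, hψ1, Pi.single_apply] at h0 h1 h2 h3
  ext i
  fin_cases i <;> simp_all

end Radical

theorem not_isKContactStruct_of_iInf_ker_eq_bot {V : Type*} [AddCommGroup V] [Module ℝ V]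
    {k : ℕ} (hk : k ≠ 0) {η : Fin k → (V →ₗ[ℝ] ℝ)} {ω : Fin k → (V →ₗ[ℝ] V →ₗ[ℝ] ℝ)}
    (h : ⨅ α, LinearMap.ker (ω α) = ⊥) : ¬ IsKContactStruct η ω := by
  rintro ⟨-, -, hrank, -⟩
  rw [h, finrank_bot] at hrank
  exact hk hrank.symm

theorem two_symplectic_extension_not_two_contact_general
    (η : Fin 2 → ((Fin 4 → ℝ) →ₗ[ℝ] ℝ))
    (ψ : Fin 2 → ((Fin 4 → ℝ) →ₗ[ℝ] (Fin 4 → ℝ) →ₗ[ℝ] ℝ))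
    (Ω : Fin 2 → ((ℝ × (Fin 4 → ℝ)) →ₗ[ℝ] (ℝ × (Fin 4 → ℝ)) →ₗ[ℝ] ℝ))
    (hη0 : ∀ u, η 0 u = u 0)
    (hψ0 : ∀ u v, ψ 0 u v = u 2 * v 3 - u 3 * v 2)
    (hψ1 : ∀ u v, ψ 1 u v = u 1 * v 0 - u 0 * v 1)
    (hΩ : ∀ (α : Fin 2) (a : ℝ) (u : Fin 4 → ℝ) (b : ℝ) (v : Fin 4 → ℝ),
      Ω α (a, u) (b, v) = a * η α v - b * η α u + ψ α u v) :
    (⨅ α, LinearMap.ker (Ω α)) = ⊥ ∧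
    (⨅ α, LinearMap.ker (ψ α)) = ⊥ ∧
    (¬ ∃ R : Fin 2 → (Fin 4 → ℝ),
      (∀ α β, η α (R β) = if α = β then 1 else 0) ∧
      (∀ α β (w : Fin 4 → ℝ), ψ α (R β) w = 0)) ∧
    ¬ IsKContactStruct η ψ := by
  have hψ := iInf_ker_eq_bot_of_complementary_area_forms hψ0 hψ1
  have he₀ : η 0 (Pi.single 0 1) ≠ 0 := by simp [hη0]
  have he₀_rad : ∀ u, ψ 0 u (Pi.single 0 1) = 0 := fun u => by simp [hψ0]
  exact ⟨iInf_ker_symplectisation_eq_bot hΩ hψ he₀ he₀_rad, hψ,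
    not_exists_reeb_of_iInf_ker_eq_bot two_ne_zero hψ,
    not_isKContactStruct_of_iInf_ker_eq_bot two_ne_zero hψ⟩

/-- **The paper's counterexample to symplectisation without lifted Reeb vectors.**
On `V = ℝ⁴` take `η₁ = e₁*`, `η₂ = e₂*`, `ψ₁(u,v) = u₃v₄ − u₄v₃`,
`ψ₂(u,v) = u₂v₁ − u₁v₂`, and on `ℝ × ℝ⁴` set
`Ω α ((a,u),(b,v)) = a·η α v − b·η α u + ψ α (u,v)`.  Then `⋂ rad (Ω α) = 0`
(so `(Ω₁, Ω₂)` is `2`-symplectic), yet `⋂ rad (ψ α) = 0` is zero- rather than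
two-dimensional; in particular no Reeb vectors exist and `(η; ψ)` is not a
`2`-contact structure on `ℝ⁴`. -/
theorem two_symplectic_extension_not_two_contact
    (η : Fin 2 → ((Fin 4 → ℝ) →ₗ[ℝ] ℝ))
    (ψ : Fin 2 → ((Fin 4 → ℝ) →ₗ[ℝ] (Fin 4 → ℝ) →ₗ[ℝ] ℝ))
    (Ω : Fin 2 → ((ℝ × (Fin 4 → ℝ)) →ₗ[ℝ] (ℝ × (Fin 4 → ℝ)) →ₗ[ℝ] ℝ))
    (hη0 : ∀ u, η 0 u = u 0) (hη1 : ∀ u, η 1 u = u 1)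
    (hψ0 : ∀ u v, ψ 0 u v = u 2 * v 3 - u 3 * v 2)
    (hψ1 : ∀ u v, ψ 1 u v = u 1 * v 0 - u 0 * v 1)
    (hΩ : ∀ (α : Fin 2) (a : ℝ) (u : Fin 4 → ℝ) (b : ℝ) (v : Fin 4 → ℝ),
      Ω α (a, u) (b, v) = a * η α v - b * η α u + ψ α u v) :
    (⨅ α, LinearMap.ker (Ω α)) = ⊥ ∧
    (⨅ α, LinearMap.ker (ψ α)) = ⊥ ∧
    (¬ ∃ R : Fin 2 → (Fin 4 → ℝ),
      (∀ α β, η α (R β) = if α = β then 1 else 0) ∧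
      (∀ α β (w : Fin 4 → ℝ), ψ α (R β) w = 0)) ∧
    ¬ IsKContactStruct η ψ :=
  two_symplectic_extension_not_two_contact_general η ψ Ω hη0 hψ0 hψ1 hΩ
end

section
/- Let 𝔤 be a real Lie algebra and μ : 𝔤 → ℝ a linear functional. Then 𝔨_{[μ]} := {ξ ∈ 𝔤 : μ(ξ) = 0 and there exists λ ∈ ℝ with μ([ξ,ν]) = λ·μ(ν) for all ν ∈ 𝔤} is a Lie subalgebra of 𝔤: it is a linear subspace of 𝔤 closed under the Lie bracket. Moreover, for all ξ, ν ∈ 𝔨_{[μ]} one has μ([[ξ,ν],ζ]) = 0 for every ζ ∈ 𝔤. -/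
/-- `𝔨_{[μ]} = ker μ ∩ 𝔤_{[μ]}`: the set of `ξ` with `μ ξ = 0` such that
`ad*_ξ μ` is proportional to `μ`, i.e. `∃ λ, μ ⁅ξ, ν⁆ = λ · μ ν` for all `ν`. -/
def kRaySet {L : Type*} [LieRing L] [LieAlgebra ℝ L] (μ : L →ₗ[ℝ] ℝ) : Set L :=
  {ξ | μ ξ = 0 ∧ ∃ l : ℝ, ∀ ν : L, μ ⁅ξ, ν⁆ = l * μ ν}

/-! The bracket of two elements of `𝔤_{[μ]}` lies in `𝔤_μ`: by the Jacobi identity,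
`μ ⁅⁅ξ, ν⁆, ζ⁆ = μ ⁅ξ, ⁅ν, ζ⁆⁆ - μ ⁅ν, ⁅ξ, ζ⁆⁆ = l m μ ζ - m l μ ζ = 0`.
Hence `𝔤_{[μ]}` is a Lie subalgebra, and so is `𝔨_{[μ]}`, since moreover
`μ ⁅ξ, ν⁆ = l μ ν = 0` once `μ ν = 0`. -/

section RayIsotropy

variable {R L : Type*} [CommRing R] [LieRing L] [LieAlgebra R L]

/-- The condition defining `𝔤_{[μ]}`: `ad*_ξ μ` is a multiple of `μ`. -/
def IsRayIsotropic (μ : L →ₗ[R] R) (ξ : L) : Prop :=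
  ∃ l : R, ∀ ν : L, μ ⁅ξ, ν⁆ = l * μ ν

variable {μ : L →ₗ[R] R}

theorem isRayIsotropic_zero : IsRayIsotropic μ 0 :=
  ⟨0, fun ν => by rw [zero_lie, map_zero, zero_mul]⟩

theorem IsRayIsotropic.add {ξ η : L} (hξ : IsRayIsotropic μ ξ) (hη : IsRayIsotropic μ η) :
    IsRayIsotropic μ (ξ + η) := by
  obtain ⟨l, hl⟩ := hξ
  obtain ⟨m, hm⟩ := hη
  exact ⟨l + m, fun ν => by rw [add_lie, map_add, hl, hm, add_mul]⟩

theorem IsRayIsotropic.smul (c : R) {ξ : L} (hξ : IsRayIsotropic μ ξ) :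
    IsRayIsotropic μ (c • ξ) := by
  obtain ⟨l, hl⟩ := hξ
  exact ⟨c * l, fun ν => by rw [smul_lie, map_smul, hl, smul_eq_mul, mul_assoc]⟩

theorem IsRayIsotropic.map_lie_lie_eq_zero {ξ η : L} (hξ : IsRayIsotropic μ ξ)
    (hη : IsRayIsotropic μ η) (ζ : L) : μ ⁅⁅ξ, η⁆, ζ⁆ = 0 := by
  obtain ⟨l, hl⟩ := hξ
  obtain ⟨m, hm⟩ := hη
  rw [lie_lie, map_sub, hl, hm, hm, hl]
  ring

theorem IsRayIsotropic.lie {ξ η : L} (hξ : IsRayIsotropic μ ξ) (hη : IsRayIsotropic μ η) :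
    IsRayIsotropic μ ⁅ξ, η⁆ :=
  ⟨0, fun ζ => by rw [hξ.map_lie_lie_eq_zero hη ζ, zero_mul]⟩

variable (μ)

/-- `𝔨_{[μ]} = ker μ ∩ 𝔤_{[μ]}` as a Lie subalgebra. -/
def kerRayIsotropy : LieSubalgebra R L where
  carrier := {ξ | μ ξ = 0 ∧ IsRayIsotropic μ ξ}
  zero_mem' := ⟨map_zero μ, isRayIsotropic_zero⟩
  add_mem' := fun ⟨hξ₀, hξ⟩ ⟨hη₀, hη⟩ => ⟨by rw [map_add, hξ₀, hη₀, add_zero], hξ.add hη⟩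
  smul_mem' := fun c _ ⟨hξ₀, hξ⟩ => ⟨by rw [map_smul, hξ₀, smul_zero], hξ.smul c⟩
  lie_mem' := fun ⟨_, hξ⟩ ⟨hη₀, hη⟩ =>
    ⟨by obtain ⟨l, hl⟩ := hξ; rw [hl, hη₀, mul_zero], hξ.lie hη⟩

end RayIsotropy

/-- **`𝔨_{[μ]}` is a Lie subalgebra.**  For a real Lie algebra `𝔤` and a linear
functional `μ : 𝔤 → ℝ`, the set
`𝔨_{[μ]} = {ξ : μ ξ = 0 ∧ ∃ λ, ∀ ν, μ ⁅ξ,ν⁆ = λ · μ ν}` is a Lie subalgebra of `𝔤`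
(a linear subspace closed under the bracket); moreover for `ξ, ν ∈ 𝔨_{[μ]}` one has
`μ ⁅⁅ξ,ν⁆, ζ⁆ = 0` for every `ζ ∈ 𝔤`. -/
theorem kRaySet_isLieSubalgebra {L : Type*} [LieRing L] [LieAlgebra ℝ L]
    (μ : L →ₗ[ℝ] ℝ) :
    (∃ S : LieSubalgebra ℝ L, (S : Set L) = kRaySet μ) ∧
    ∀ ξ ∈ kRaySet μ, ∀ ν ∈ kRaySet μ, ∀ ζ : L, μ ⁅⁅ξ, ν⁆, ζ⁆ = 0 :=
  ⟨⟨kerRayIsotropy μ, rfl⟩, fun _ hξ _ hν ζ => IsRayIsotropic.map_lie_lie_eq_zero hξ.2 hν.2 ζ⟩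
end
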